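/- For every ε with 0 ≤ ε < 1, the function u(θ,φ) = sin θ · cos φ satisfies Δ₁ u = (-2 + 2ε²)·u exactly (with no order-ε⁴ remainder) at every point (θ,φ) with 0 < θ < π and φ ∈ ℝ. -/

import Mathlib

open Real

/-- The truncated (first order in `ε²`) Finslerian Laplace operator, acting on a function
`u : ℝ → ℝ → ℝ` of the angular variables `(θ, φ)`. -/
noncomputable def truncLaplacian (ε : ℝ) (u : ℝ → ℝ → ℝ) (θ φ : ℝ) : ℝ :=
  ((4 - 5 * ε ^ 2 * sin θ ^ 2) / (4 * sin θ ^ 2)) * deriv (deriv (u θ)) φ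
  + (1 - 3 / 4 * ε ^ 2 * sin θ ^ 2) * deriv (deriv (fun t => u t φ)) θ
  + (cos θ / sin θ) * (1 + 3 / 4 * ε ^ 2 * sin θ ^ 2) * deriv (fun t => u t φ) θ

/- No differentiability of `f` or `g` is needed: `deriv` commutes with constant factors
unconditionally. -/
theorem truncLaplacian_mul_separated (ε : ℝ) (f g : ℝ → ℝ) (θ φ : ℝ) :
    truncLaplacian ε (fun θ' φ' => f θ' * g φ') θ φ =
      ((4 - 5 * ε ^ 2 * sin θ ^ 2) / (4 * sin θ ^ 2)) * (f θ * deriv (deriv g) φ)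
      + (1 - 3 / 4 * ε ^ 2 * sin θ ^ 2) * (deriv (deriv f) θ * g φ)
      + (cos θ / sin θ) * (1 + 3 / 4 * ε ^ 2 * sin θ ^ 2) * (deriv f θ * g φ) := by
  simp only [truncLaplacian, deriv_const_mul_field', deriv_mul_const_field']

theorem truncLaplacian_sin_cos_eigen_general (ε : ℝ)
    (θ φ : ℝ) (hθ0 : 0 < θ) (hθπ : θ < Real.pi) :
    truncLaplacian ε (fun θ' φ' => Real.sin θ' * Real.cos φ') θ φ =
      (-2 + 2 * ε ^ 2) * (Real.sin θ * Real.cos φ) := by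
  have hsin : sin θ ≠ 0 := (sin_pos_of_pos_of_lt_pi hθ0 hθπ).ne'
  rw [truncLaplacian_mul_separated]
  simp only [Real.deriv_sin, Real.deriv_cos', deriv.fun_neg']
  field_simp
  linear_combination (3 * ε ^ 2 * sin θ ^ 2 * cos φ + 4 * cos φ) * sin_sq_add_cos_sq θ

/-- `sin θ · cos φ` satisfies `Δ₁ u = (-2 + 2ε²)·u` exactly, for every `0 ≤ ε < 1`. -/
theorem truncLaplacian_sin_cos_eigen (ε : ℝ) (hε0 : 0 ≤ ε) (hε1 : ε < 1)
    (θ φ : ℝ) (hθ0 : 0 < θ) (hθπ : θ < Real.pi) :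
    truncLaplacian ε (fun θ' φ' => Real.sin θ' * Real.cos φ') θ φ =
      (-2 + 2 * ε ^ 2) * (Real.sin θ * Real.cos φ) :=
  truncLaplacian_sin_cos_eigen_general ε θ φ hθ0 hθπ
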